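/- For every integer n ≥ 0, σmex(n) − σmex(n−1) − δ(n) = Σ_{j ≥ 0} M₁(n − j(j+1)/2), where δ(n) = 1 if n is a triangular number m(m+1)/2 and 0 otherwise, and M₁(m) counts partitions of m with no part equal to 1 (M₁(0) = 0). -/

import Mathlib

open scoped Classical

/-- The minimal excludant of a partition: the least positive integer not a part. -/
noncomputable def Nat.Partition.mex {n : ℕ} (l : n.Partition) : ℕ :=
  sInf {k : ℕ | 0 < k ∧ k ∉ l.parts}

/-- Sum of minimal excludants over all partitions of `n`. -/
noncomputable def sigmaMex (n : ℕ) : ℕ := ∑ l : Nat.Partition n, l.mex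

/-- `sigmaMex` extended to ℤ by zero on negatives. -/
noncomputable def sigmaMexZ (n : ℤ) : ℤ := if 0 ≤ n then sigmaMex n.toNat else 0

/-- The partition function, extended to ℤ by zero on negatives. -/
noncomputable def partitionsZ (n : ℤ) : ℤ :=
  if 0 ≤ n then Fintype.card (Nat.Partition n.toNat) else 0

/-- `M_k(n)`: partitions of `n` whose mex is `k` with more parts `> k` than parts `< k`. -/
noncomputable def Mfun (k n : ℕ) : ℕ :=
  Nat.card {l : Nat.Partition n //
    l.mex = k ∧ (l.parts.filter fun t => t < k).card < (l.parts.filter fun t => k < t).card}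

noncomputable def MfunZ (k : ℕ) (n : ℤ) : ℤ := if 0 ≤ n then Mfun k n.toNat else 0

/-- A multiset of colored parts is a colored partition of `n`. -/
def IsColoredPartition {c : ℕ} (n : ℕ) (m : Multiset (ℕ × Fin c)) : Prop :=
  (∀ p ∈ m, 0 < p.1) ∧ (m.map Prod.fst).sum = n

/-- Number of partitions of `n` into distinct two-colored parts. -/
noncomputable def D2 (n : ℕ) : ℕ :=
  Nat.card {m : Multiset (ℕ × Fin 2) // IsColoredPartition n m ∧ m.Nodup}

/-- Number of partitions of `n` into distinct parts. -/
def D1 (n : ℕ) : ℕ := (Nat.Partition.distincts n).card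

/-- Indicator of triangular numbers. -/
noncomputable def deltaTri (n : ℤ) : ℤ := if ∃ m : ℤ, 2 * n = m * (m + 1) then 1 else 0

/-- `δ'(n) = (-1)^m` if `n = m(3m-1)` for some integer `m`, else `0`. -/
noncomputable def deltaPent (n : ℤ) : ℤ :=
  ∑' m : ℤ, if n = m * (3 * m - 1) then (if Even m then (1 : ℤ) else -1) else 0

/-- Overpartition: positive parts summing to `n`, overlined (`true`) parts occur at most once
per size. -/
def IsOverpartition (n : ℕ) (m : Multiset (ℕ × Bool)) : Prop :=
  (∀ p ∈ m, 0 < p.1) ∧ (m.map Prod.fst).sum = n ∧ ∀ s : ℕ, m.count (s, true) ≤ 1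

/-- Overpartitions of `n` in which the largest part size exceeding `k` appears at least
`k+1` times. -/
noncomputable def Mbar (k n : ℕ) : ℕ :=
  Nat.card {m : Multiset (ℕ × Bool) // IsOverpartition n m ∧
    ∃ s ∈ m.map Prod.fst, k < s ∧ (∀ t ∈ m.map Prod.fst, k < t → t ≤ s) ∧
      k + 1 ≤ (m.map Prod.fst).count s}

noncomputable def MbarZ (k : ℕ) (n : ℤ) : ℤ := if 0 ≤ n then Mbar k n.toNat else 0

/-- `D₂*(n)`: two-colored distinct partitions with gap-free color-0 parts and even
color-1 parts. -/
noncomputable def D2star (n : ℕ) : ℕ :=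
  Nat.card {m : Multiset (ℕ × Fin 2) // IsColoredPartition n m ∧ m.Nodup ∧
    (∃ j : ℕ, (m.filter fun p => p.2 = 0).map Prod.fst = (Multiset.range j).map (· + 1)) ∧
    ∀ p ∈ m, p.2 = 1 → Even p.1}

/-- Partitions of `n` in which odd parts are not repeated. -/
noncomputable def pod (n : ℕ) : ℕ :=
  Nat.card {l : Nat.Partition n // ∀ t : ℕ, Odd t → l.parts.count t ≤ 1}

/-- `MP_k(n)`: partitions where the largest part exceeding `2k-1` is odd and appears
exactly `k` times, all other odd parts appearing at most once. -/
noncomputable def MPfun (k n : ℕ) : ℕ :=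
  Nat.card {l : Nat.Partition n // ∃ s ∈ l.parts, 2 * k - 1 < s ∧
    (∀ t ∈ l.parts, 2 * k - 1 < t → t ≤ s) ∧ Odd s ∧ l.parts.count s = k ∧
    ∀ t ∈ l.parts, Odd t → t ≠ s → l.parts.count t ≤ 1}

/-- The `r`-gap of a partition: least positive integer appearing fewer than `r` times. -/
noncomputable def Nat.Partition.rgap {n : ℕ} (r : ℕ) (l : n.Partition) : ℕ :=
  sInf {k : ℕ | 0 < k ∧ l.parts.count k < r}

/-- Sum of the `r`-gaps of all partitions of `n`. -/
noncomputable def sigmaMexR (r n : ℕ) : ℕ := ∑ l : Nat.Partition n, l.rgap r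

/-- Two-colored partitions: color-0 parts distinct and divisible by `r`; each color-1
part size occurs at most `2r-1` times. -/
noncomputable def Dtilde (r n : ℕ) : ℕ :=
  Nat.card {m : Multiset (ℕ × Fin 2) // IsColoredPartition n m ∧
    (m.filter fun p => p.2 = 0).Nodup ∧ (∀ p ∈ m, p.2 = 0 → r ∣ p.1) ∧
    ∀ s : ℕ, m.count (s, 1) ≤ 2 * r - 1}

/-- `D₁(x/2)` when `x` is a non-negative even integer, `0` otherwise. -/
noncomputable def D1half (x : ℤ) : ℤ := if 0 ≤ x ∧ 2 ∣ x then D1 (x / 2).toNat else 0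

/-- `j = |r| - 1/2 + sign(r)·(-1)^r/2`. -/
def jOf (r : ℤ) : ℤ :=
  if 0 ≤ r then (if Even r then r else r - 1) else (if Even r then -r - 1 else -r)

/-- `D₃^{(k)}(n)`: three-colored distinct partitions satisfying the conditions of
Proposition 3.2. -/
noncomputable def D3 (k n : ℕ) : ℕ :=
  Nat.card {m : Multiset (ℕ × Fin 3) // IsColoredPartition n m ∧ m.Nodup ∧
    (m.filter fun p => p.2 = 2).card = k ∧
    (1 < k → ∀ a ∈ (m.filter fun p => p.2 = 2).map Prod.fst,
        ∀ b ∈ (m.filter fun p => p.2 = 2).map Prod.fst, b < 2 * a) ∧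
    ∃ a b : ℕ,
      a ∈ (m.filter fun p => (p.2 : ℕ) =
        (jOf (((m.filter fun q => q.2 = 0).card : ℤ) -
          ((m.filter fun q => q.2 = 1).card : ℤ)) % 2).toNat).map Prod.fst ∧
      (∀ t ∈ (m.filter fun p => (p.2 : ℕ) =
        (jOf (((m.filter fun q => q.2 = 0).card : ℤ) -
          ((m.filter fun q => q.2 = 1).card : ℤ)) % 2).toNat).map Prod.fst, t ≤ a) ∧
      b ∈ (m.filter fun p => p.2 = 2).map Prod.fst ∧
      (∀ t ∈ (m.filter fun p => p.2 = 2).map Prod.fst, b ≤ t) ∧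
      (a : ℤ) = jOf (((m.filter fun q => q.2 = 0).card : ℤ) -
          ((m.filter fun q => q.2 = 1).card : ℤ)) + b}

/-! `mex λ` is the number of `j ≥ 0` with `{1, …, j} ⊆ λ`, and deleting the parts `1, …, j`
identifies the partitions of `n` containing them with the partitions of `n - j(j+1)/2`. Hence
`σmex(n) = Σ_j p(n - j(j+1)/2)`, and differencing reduces the theorem to `p(m) - p(m-1)` being the
number of partitions of `m` with no part `1`: that is `M₁(m)` for `m > 0`, while the terms with
`m = 0` add up to `δ(n)`. -/

open Finset

namespace Nat.Partition

variable {n : ℕ}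

lemma sum_le_of_le_parts {s : Multiset ℕ} {p : n.Partition} (h : s ≤ p.parts) : s.sum ≤ n := by
  rw [← p.parts_sum, ← tsub_add_cancel_of_le h, Multiset.sum_add]
  exact Nat.le_add_left _ _

def partitionWithPartsEquiv {s : Multiset ℕ} (hs : ∀ i ∈ s, 0 < i) (h : s.sum ≤ n) :
    {p : n.Partition // s ≤ p.parts} ≃ (n - s.sum).Partition where
  toFun p :=
    { parts := p.1.parts - s
      parts_pos := fun hi => p.1.parts_pos (Multiset.mem_of_le tsub_le_self hi)
      parts_sum := by
        have := congrArg Multiset.sum (tsub_add_cancel_of_le p.2)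
        rw [Multiset.sum_add, p.1.parts_sum] at this
        omega }
  invFun q :=
    ⟨{ parts := q.parts + s
       parts_pos := fun hi => (Multiset.mem_add.mp hi).elim q.parts_pos (hs _)
       parts_sum := by rw [Multiset.sum_add, q.parts_sum]; omega },
     le_add_self⟩
  left_inv p := Subtype.ext <| Nat.Partition.ext <| tsub_add_cancel_of_le p.2
  right_inv q := Nat.Partition.ext <| add_tsub_cancel_right _ _

lemma card_filter_le_parts {s : Multiset ℕ} (hs : ∀ i ∈ s, 0 < i) :
    (#{p : n.Partition | s ≤ p.parts} : ℤ) = partitionsZ (n - s.sum) := by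
  by_cases h : s.sum ≤ n
  · rw [partitionsZ, if_pos (by omega), show ((n : ℤ) - s.sum).toNat = n - s.sum by omega,
      ← Fintype.card_subtype, Fintype.card_congr (partitionWithPartsEquiv hs h)]
  · rw [partitionsZ, if_neg (by omega), Nat.cast_eq_zero, Finset.card_eq_zero,
      filter_eq_empty_iff]
    exact fun p _ hp => h (sum_le_of_le_parts hp)

lemma mex_pos_and_notMem (p : n.Partition) : 0 < p.mex ∧ p.mex ∉ p.parts :=
  Nat.sInf_mem (s := {k | 0 < k ∧ k ∉ p.parts})
    ⟨n + 1, n.succ_pos, fun h => by have := le_of_mem_parts h; omega⟩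

lemma lt_mex_iff {p : n.Partition} {j : ℕ} : j < p.mex ↔ ∀ k, 0 < k → k ≤ j → k ∈ p.parts := by
  refine ⟨fun h k hk hkj => ?_, fun h => ?_⟩
  · by_contra hk'
    exact Nat.notMem_of_lt_sInf (lt_of_le_of_lt hkj h) ⟨hk, hk'⟩
  · by_contra! hj
    obtain ⟨hpos, hnot⟩ := mex_pos_and_notMem p
    exact hnot (h _ hpos hj)

lemma lt_mex_iff_Icc_le_parts {p : n.Partition} {j : ℕ} :
    j < p.mex ↔ (Icc 1 j).val ≤ p.parts := by
  rw [Multiset.le_iff_subset (Icc 1 j).nodup, lt_mex_iff]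
  simp only [Multiset.subset_iff, Finset.mem_val, Finset.mem_Icc]
  exact ⟨fun h k hk => h k hk.1 hk.2, fun h k hk hkj => h ⟨hk, hkj⟩⟩

lemma mex_le_succ (p : n.Partition) : p.mex ≤ n + 1 := by
  by_contra! h
  have := le_of_mem_parts (lt_mex_iff.mp h (n + 1) n.succ_pos le_rfl)
  omega

lemma mex_eq_one_iff {p : n.Partition} : p.mex = 1 ↔ 1 ∉ p.parts := by
  have hpos := (mex_pos_and_notMem p).1
  have h1 : 1 < p.mex ↔ 1 ∈ p.parts := by
    rw [lt_mex_iff]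
    exact ⟨fun h => h 1 one_pos le_rfl, fun h k hk hk1 => (show k = 1 by omega) ▸ h⟩
  rw [← h1]
  omega

end Nat.Partition

def triangular (j : ℕ) : ℕ := j * (j + 1) / 2

lemma two_mul_triangular (j : ℕ) : 2 * triangular j = j * (j + 1) :=
  Nat.mul_div_cancel' (Nat.even_mul_succ_self j).two_dvd

lemma intCast_triangular (j : ℕ) : (j : ℤ) * (j + 1) / 2 = triangular j := by
  rw [triangular, Int.natCast_div]
  push_cast
  rfl

lemma intCast_two_mul_triangular (j : ℕ) : 2 * (triangular j : ℤ) = j * (j + 1) := by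
  exact_mod_cast two_mul_triangular j

lemma le_triangular (j : ℕ) : j ≤ triangular j := by
  nlinarith [two_mul_triangular j]

lemma triangular_strictMono : StrictMono triangular :=
  strictMono_nat_of_lt_succ fun j => by
    nlinarith [two_mul_triangular j, two_mul_triangular (j + 1)]

lemma sum_Icc_id_eq_triangular (j : ℕ) : ∑ i ∈ Icc 1 j, i = triangular j := by
  induction j with
  | zero => rfl
  | succ j ih =>
    rw [sum_Icc_succ_top (by omega), ih]
    nlinarith [two_mul_triangular j, two_mul_triangular (j + 1)]

lemma exists_two_mul_eq_mul_succ_iff (m : ℤ) :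
    (∃ k : ℤ, 2 * m = k * (k + 1)) ↔ ∃ j : ℕ, m = triangular j := by
  refine ⟨fun ⟨k, hk⟩ => ?_, fun ⟨j, hj⟩ => ⟨j, by rw [hj, intCast_two_mul_triangular]⟩⟩
  -- `k (k + 1) = (-k - 1) (-k)`, so a negative `k` gives the triangular number of `-k - 1`
  obtain ⟨j, rfl | rfl⟩ := Int.eq_nat_or_neg k
  · exact ⟨j, mul_left_cancel₀ two_ne_zero (by rw [hk, intCast_two_mul_triangular])⟩
  · rcases j with _ | j
    · exact ⟨0, by simpa [triangular] using hk⟩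
    · refine ⟨j, mul_left_cancel₀ two_ne_zero ?_⟩
      rw [hk, intCast_two_mul_triangular]
      push_cast
      ring

lemma deltaTri_eq_sum (m : ℤ) {N : ℕ} (hN : m < N) :
    deltaTri m = ∑ j ∈ range N, if m = triangular j then 1 else 0 := by
  rw [deltaTri, exists_two_mul_eq_mul_succ_iff]
  split_ifs with h
  · obtain ⟨j₀, rfl⟩ := h
    have hj : ∀ j, ((triangular j₀ : ℕ) : ℤ) = triangular j ↔ j₀ = j := fun j => by
      rw [Nat.cast_inj, triangular_strictMono.injective.eq_iff]
    simp only [hj, sum_ite_eq, mem_range]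
    rw [if_pos (by have := le_triangular j₀; omega)]
  · push Not at h
    exact (sum_eq_zero fun j _ => if_neg (h j)).symm

open Nat.Partition

lemma sigmaMex_eq_sum {n N : ℕ} (hN : n < N) :
    (sigmaMex n : ℤ) = ∑ j ∈ range N, partitionsZ (n - triangular j) := by
  have hmex (p : n.Partition) : p.mex = #{j ∈ range N | j < p.mex} := by
    rw [show {j ∈ range N | j < p.mex} = range p.mex by
      ext j; simp only [mem_filter, mem_range]; have := mex_le_succ p; omega, card_range]
  have hcount (j : ℕ) : (#{p : n.Partition | j < p.mex} : ℤ) = partitionsZ (n - triangular j) := by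
    simp only [lt_mex_iff_Icc_le_parts]
    rw [card_filter_le_parts (fun i hi => (mem_Icc.mp hi).1),
      (sum_val _).trans (sum_Icc_id_eq_triangular j)]
  calc (sigmaMex n : ℤ) = ((∑ p : n.Partition, #{j ∈ range N | j < p.mex} : ℕ) : ℤ) := by
        rw [sigmaMex, ← sum_congr rfl fun p _ => hmex p]
    _ = ∑ j ∈ range N, partitionsZ (n - triangular j) := by
        have := sum_card_bipartiteAbove_eq_sum_card_bipartiteBelow (s := univ) (t := range N)
          fun (p : n.Partition) j => j < p.mex
        simp only [bipartiteAbove, bipartiteBelow] at this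
        rw [this]
        push_cast
        exact sum_congr rfl fun j _ => hcount j

lemma sigmaMexZ_eq_sum (m : ℤ) {N : ℕ} (hN : m < N) :
    sigmaMexZ m = ∑ j ∈ range N, partitionsZ (m - triangular j) := by
  rw [sigmaMexZ]
  split_ifs with hm
  · lift m to ℕ using hm
    exact sigmaMex_eq_sum (by omega)
  · refine (sum_eq_zero fun j _ => ?_).symm
    rw [partitionsZ, if_neg (by omega)]

lemma Mfun_one_eq_card (k : ℕ) : Mfun 1 k = #{p : k.Partition | 1 ∉ p.parts ∧ p.parts ≠ 0} := by
  rw [Mfun, Nat.card_eq_fintype_card, Fintype.card_subtype]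
  refine congrArg card (filter_congr fun p _ => ?_)
  have hsmall : p.parts.filter (· < 1) = 0 :=
    Multiset.filter_eq_nil.mpr fun t ht => by have := p.parts_pos ht; omega
  rw [mex_eq_one_iff, hsmall, Multiset.card_zero, Multiset.card_pos]
  refine and_congr_right fun h1 => ?_
  have hlarge : p.parts.filter (1 < ·) = p.parts := Multiset.filter_eq_self.mpr fun t ht =>
    lt_of_le_of_ne (p.parts_pos ht) fun e => h1 (e ▸ ht)
  rw [hlarge]

lemma card_filter_one_notMem_parts (k : ℕ) :
    #{p : k.Partition | 1 ∉ p.parts} = Mfun 1 k + if k = 0 then 1 else 0 := by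
  rw [Mfun_one_eq_card]
  rcases k with _ | k
  · simp
  · have hne (p : (k + 1).Partition) : p.parts ≠ 0 := fun h => by simpa [h] using p.parts_sum
    simp [hne]

lemma partitionsZ_sub_partitionsZ_sub_one (m : ℤ) :
    partitionsZ m - partitionsZ (m - 1) - (if m = 0 then 1 else 0) = MfunZ 1 m := by
  rcases lt_or_ge m 0 with hm | hm
  · simp [partitionsZ, MfunZ, hm.not_ge, hm.ne]
    omega
  · lift m to ℕ using hm
    have hsplit := card_filter_add_card_filter_not (s := univ) fun p : m.Partition => 1 ∈ p.parts
    have hone := card_filter_le_parts (n := m) (s := {1}) (by simp)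
    simp only [Multiset.singleton_le, Multiset.sum_singleton, Nat.cast_one] at hone
    rw [card_filter_one_notMem_parts, card_univ] at hsplit
    have hcard : (Fintype.card m.Partition : ℤ) =
        partitionsZ (m - 1) + Mfun 1 m + if m = 0 then 1 else 0 := by
      rw [← hsplit, ← hone]
      push_cast
      ring
    simp only [partitionsZ, MfunZ, Nat.cast_nonneg, if_true, Int.toNat_natCast, hcard,
      Nat.cast_eq_zero]
    ring

theorem stmt4 (n : ℕ) :
    (sigmaMex n : ℤ) - sigmaMexZ ((n : ℤ) - 1) - deltaTri n =
      ∑' j : ℕ, MfunZ 1 ((n : ℤ) - j * (j + 1) / 2) := by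
  have hvanish : ∀ j ∉ range (n + 1), MfunZ 1 ((n : ℤ) - triangular j) = 0 := fun j hj => by
    have := le_triangular j
    rw [mem_range] at hj
    rw [MfunZ, if_neg (by omega)]
  simp only [intCast_triangular]
  rw [tsum_eq_sum hvanish, sigmaMex_eq_sum (lt_add_one n),
    sigmaMexZ_eq_sum _ (N := n + 1) (by omega), deltaTri_eq_sum _ (N := n + 1) (by omega),
    ← sum_sub_distrib, ← sum_sub_distrib]
  refine sum_congr rfl fun j _ => ?_
  rw [← partitionsZ_sub_partitionsZ_sub_one, sub_right_comm (n : ℤ)]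
  simp only [sub_eq_zero]
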